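/- In the rewrite system R (rules: x+e→x, e+x→x, (x+y)+z→x+(y+z), (x+y)·z→y·(x·z), (d·x)·y→x·(y+x), e·x→x, d·e→e), every ground term t has a unique normal form nf(t), and for ground terms t, u we have t ≡ u in the equational theory iff nf(t) = nf(u). -/

import Mathlib

/-- Ground terms over constants d, e with binary operations + (add) and · (app). -/
inductive Tm : Type
  | d : Tm
  | e : Tm
  | add : Tm → Tm → Tm
  | app : Tm → Tm → Tm
  deriving DecidableEq

open Tm

/-- Root rewrite steps: instances of the oriented rules. -/
inductive Root : Tm → Tm → Prop
  | addE (x) : Root (add x e) x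
  | eAdd (x) : Root (add e x) x
  | assoc (x y z) : Root (add (add x y) z) (add x (add y z))
  | appAdd (x y z) : Root (app (add x y) z) (app y (app x z))
  | appD (x y) : Root (app (app d x) y) (app x (add y x))
  | appE (x) : Root (app e x) x
  | dE : Root (app d e) e

/-- One rewrite step: a root step applied at some subterm position. -/
inductive Step : Tm → Tm → Prop
  | root {t u} : Root t u → Step t u
  | addL {t t' u} : Step t t' → Step (add t u) (add t' u)
  | addR {t u u'} : Step u u' → Step (add t u) (add t u')
  | appL {t t' u} : Step t t' → Step (app t u) (app t' u)
  | appR {t u u'} : Step u u' → Step (app t u) (app t u')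

/-- Zero or more rewrite steps. -/
def Steps : Tm → Tm → Prop := Relation.ReflTransGen Step

/-- A normal form is a term to which no rule applies. -/
def NormalForm (t : Tm) : Prop := ∀ u, ¬ Step t u

/-- Provable equality in the equational theory (reflexive symmetric transitive
congruence closure of the rule instances). -/
def TermEq : Tm → Tm → Prop := Relation.EqvGen Step

/-!
The normal forms are computed by an explicit interpreter `nf`: sums are flattened into
right-nested sums of non-`e` atoms (`nfAdd`), and `x · y` is evaluated by letting the
normal form of `x` act on `y` (`nfApp`), following the rules for `e`, `+` and `d`.
Each rule becomes an identity between these operations, so `nf` is constant on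
`≡`-classes; every term rewrites to `nf t`, and `nf t` is irreducible. A function with
these three properties pins down both the unique normal form and the equational theory.
-/

namespace Relation

variable {α : Type*} {r : α → α → Prop} {f : α → α}

theorem eqvGen_iff_eq_of_normalizing (hf : ∀ a b, r a b → f a = f b)
    (hreach : ∀ a, ReflTransGen r a (f a)) {a b : α} : EqvGen r a b ↔ f a = f b := by
  refine ⟨fun h => congrArg (Quot.lift f hf) (Quot.eqvGen_sound h), fun h => ?_⟩
  have hb := EqvGen.reflTransGen_le_eqvGen r _ _ (hreach b)
  rw [← h] at hb
  exact (EqvGen.reflTransGen_le_eqvGen r _ _ (hreach a)).trans _ _ _ (hb.symm _ _)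

theorem eq_of_reflTransGen_of_normalizing (hf : ∀ a b, r a b → f a = f b)
    (hreach : ∀ a, ReflTransGen r a (f a)) {a n : α} (h : ReflTransGen r a n)
    (hn : ∀ c, ¬ r n c) : n = f a := by
  rw [(eqvGen_iff_eq_of_normalizing hf hreach).1 (EqvGen.reflTransGen_le_eqvGen r _ _ h)]
  exact ((reflTransGen_iff_eq hn).1 (hreach n)).symm

end Relation

namespace Tm

def nfAdd : Tm → Tm → Tm
  | e, y => y
  | add a b, y => if y = e then add a b else nfAdd a (nfAdd b y)
  | x, y => if y = e then x else add x y

def nfApp : Tm → Tm → Tm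
  | e, y => y
  | d, y => if y = e then e else app d y
  | add a b, y => nfApp b (nfApp a y)
  | app a b, y => if a = d then nfApp b (nfAdd y b) else app (app a b) y

def nf : Tm → Tm
  | d => d
  | e => e
  | add a b => nfAdd (nf a) (nf b)
  | app a b => nfApp (nf a) (nf b)

@[simp] lemma nfAdd_e (x : Tm) : nfAdd x e = x := by cases x <;> simp [nfAdd]

lemma nfAdd_ne_e (y : Tm) {z : Tm} (hz : z ≠ e) : nfAdd y z ≠ e := by
  induction y generalizing z with
  | add a b iha ihb => simpa [nfAdd, hz] using iha (ihb hz)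
  | _ => simp [nfAdd, hz]

lemma nfAdd_assoc (x y z : Tm) : nfAdd (nfAdd x y) z = nfAdd x (nfAdd y z) := by
  induction x generalizing y with
  | add a b iha ihb =>
    by_cases hy : y = e
    · simp [hy, nfAdd]
    by_cases hz : z = e
    · simp [hz]
    simp [nfAdd, hy, nfAdd_ne_e _ hz, iha, ihb]
  | _ => by_cases hy : y = e <;> by_cases hz : z = e <;> simp [nfAdd, hy, hz]

lemma nfApp_nfAdd (x y z : Tm) : nfApp (nfAdd x y) z = nfApp y (nfApp x z) := by
  induction x generalizing y z with
  | add a b iha ihb => by_cases hy : y = e <;> simp [nfAdd, nfApp, hy, iha, ihb]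
  | _ => by_cases hy : y = e <;> simp [nfAdd, nfApp, hy]

lemma nfApp_nfApp_d (x y : Tm) : nfApp (nfApp d x) y = nfApp x (nfAdd y x) := by
  by_cases hx : x = e <;> simp [nfApp, hx]

lemma nf_eq_of_root {t u : Tm} (h : Root t u) : nf t = nf u := by
  cases h <;> simp [nf, nfAdd_assoc, nfApp_nfAdd, nfApp_nfApp_d] <;> rfl

lemma nf_eq_of_step {t u : Tm} (h : Step t u) : nf t = nf u := by
  induction h with
  | root h => exact nf_eq_of_root h
  | _ _ ih => simp [nf, ih]

lemma steps_add {t t' u u' : Tm} (ht : Steps t t') (hu : Steps u u') :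
    Steps (add t u) (add t' u') :=
  (Relation.ReflTransGen.lift (add · u) (fun _ _ => .addL) _ _ ht).trans
    (Relation.ReflTransGen.lift (add t' ·) (fun _ _ => .addR) _ _ hu)

lemma steps_app {t t' u u' : Tm} (ht : Steps t t') (hu : Steps u u') :
    Steps (app t u) (app t' u') :=
  (Relation.ReflTransGen.lift (app · u) (fun _ _ => .appL) _ _ ht).trans
    (Relation.ReflTransGen.lift (app t' ·) (fun _ _ => .appR) _ _ hu)

lemma steps_of_root {t u : Tm} (h : Root t u) : Steps t u := .single (.root h)

lemma steps_nfAdd (x y : Tm) : Steps (add x y) (nfAdd x y) := by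
  induction x generalizing y with
  | e => exact steps_of_root (.eAdd y)
  | add a b iha ihb =>
    by_cases hy : y = e
    · subst hy; exact steps_of_root (.addE _)
    rw [nfAdd, if_neg hy]
    exact (steps_of_root (.assoc a b y)).trans ((steps_add .refl (ihb y)).trans (iha _))
  | _ =>
    by_cases hy : y = e
    · subst hy; exact steps_of_root (.addE _)
    · simpa [nfAdd, hy] using .refl

lemma steps_nfApp (x y : Tm) : Steps (app x y) (nfApp x y) := by
  induction x generalizing y with
  | e => exact steps_of_root (.appE y)
  | d =>
    by_cases hy : y = e
    · subst hy; exact steps_of_root .dE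
    · simpa [nfApp, hy] using .refl
  | add a b iha ihb =>
    exact (steps_of_root (.appAdd a b y)).trans ((steps_app .refl (iha y)).trans (ihb _))
  | app a b _ ihb =>
    by_cases ha : a = d
    · subst ha
      exact (steps_of_root (.appD b y)).trans
        ((steps_app .refl (steps_nfAdd y b)).trans (ihb _))
    · simpa [nfApp, ha] using .refl

lemma steps_nf (t : Tm) : Steps t (nf t) := by
  induction t with
  | d | e => exact .refl
  | add a b iha ihb => exact (steps_add iha ihb).trans (steps_nfAdd _ _)
  | app a b iha ihb => exact (steps_app iha ihb).trans (steps_nfApp _ _)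

lemma normalForm_d : NormalForm d := by
  rintro _ ⟨⟨⟩⟩

lemma normalForm_e : NormalForm e := by
  rintro _ ⟨⟨⟩⟩

lemma normalForm_add_iff {x y : Tm} :
    NormalForm (add x y) ↔
      NormalForm x ∧ NormalForm y ∧ x ≠ e ∧ y ≠ e ∧ ∀ a b, x ≠ add a b := by
  constructor
  · intro h
    refine ⟨fun _ hx => h _ (.addL hx), fun _ hy => h _ (.addR hy), ?_, ?_, ?_⟩
    · rintro rfl; exact h _ (.root (.eAdd y))
    · rintro rfl; exact h _ (.root (.addE x))
    · rintro a b rfl; exact h _ (.root (.assoc a b y))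
  · rintro ⟨hx, hy, hxe, hye, hxa⟩ u (⟨⟨⟩⟩ | ⟨hx'⟩ | ⟨hy'⟩ | - | -)
    · exact hye rfl
    · exact hxe rfl
    · exact hxa _ _ rfl
    · exact hx _ hx'
    · exact hy _ hy'

lemma normalForm_app_iff {x y : Tm} :
    NormalForm (app x y) ↔
      NormalForm x ∧ NormalForm y ∧ x ≠ e ∧ (∀ a b, x ≠ add a b) ∧ (∀ a, x ≠ app d a) ∧
        ¬(x = d ∧ y = e) := by
  constructor
  · intro h
    refine ⟨fun _ hx => h _ (.appL hx), fun _ hy => h _ (.appR hy), ?_, ?_, ?_, ?_⟩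
    · rintro rfl; exact h _ (.root (.appE y))
    · rintro a b rfl; exact h _ (.root (.appAdd a b y))
    · rintro a rfl; exact h _ (.root (.appD a y))
    · rintro ⟨rfl, rfl⟩; exact h _ (.root .dE)
  · rintro ⟨hx, hy, hxe, hxa, hxd, hde⟩ u (⟨⟨⟩⟩ | - | - | ⟨hx'⟩ | ⟨hy'⟩)
    · exact hxa _ _ rfl
    · exact hxd _ rfl
    · exact hxe rfl
    · exact hde ⟨rfl, rfl⟩
    · exact hx _ hx'
    · exact hy _ hy'

lemma normalForm_nfAdd {x y : Tm} (hx : NormalForm x) (hy : NormalForm y) :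
    NormalForm (nfAdd x y) := by
  induction x generalizing y with
  | e => exact hy
  | add a b iha ihb =>
    obtain ⟨ha, hb, -⟩ := normalForm_add_iff.1 hx
    by_cases h : y = e
    · simpa [h] using hx
    · simpa [nfAdd, h] using iha ha (ihb hb hy)
  | d => by_cases h : y = e <;> simp_all [nfAdd, normalForm_add_iff, normalForm_d]
  | app a b => by_cases h : y = e <;> simp_all [nfAdd, normalForm_add_iff]

lemma normalForm_nfApp {x y : Tm} (hx : NormalForm x) (hy : NormalForm y) :
    NormalForm (nfApp x y) := by
  induction x generalizing y with
  | e => exact hy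
  | d =>
    by_cases h : y = e <;> simp_all [nfApp, normalForm_app_iff, normalForm_d, normalForm_e]
  | add a b iha ihb =>
    obtain ⟨ha, hb, -⟩ := normalForm_add_iff.1 hx
    exact ihb hb (iha ha hy)
  | app a b _ ihb =>
    obtain ⟨-, hb, -⟩ := normalForm_app_iff.1 hx
    by_cases ha : a = d
    · subst ha; exact ihb hb (normalForm_nfAdd hy hb)
    · simp_all [nfApp, normalForm_app_iff]

lemma normalForm_nf (t : Tm) : NormalForm (nf t) := by
  induction t with
  | d => exact normalForm_d
  | e => exact normalForm_e
  | add a b iha ihb => exact normalForm_nfAdd iha ihb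
  | app a b iha ihb => exact normalForm_nfApp iha ihb

end Tm

/-- every ground term has a unique normal form, and two terms are
provably equal iff they have the same normal form. -/
theorem unique_normal_forms_and_word_problem :
    (∀ t : Tm, ∃! n : Tm, Steps t n ∧ NormalForm n) ∧
    (∀ t u nt nu : Tm, Steps t nt → NormalForm nt → Steps u nu → NormalForm nu →
      (TermEq t u ↔ nt = nu)) := by
  have eq_nf {t n : Tm} (hs : Steps t n) (hn : NormalForm n) : n = nf t :=
    Relation.eq_of_reflTransGen_of_normalizing (fun _ _ h => nf_eq_of_step h) steps_nf hs hn
  refine ⟨fun t => ⟨nf t, ⟨steps_nf t, normalForm_nf t⟩, fun n ⟨hs, hn⟩ => eq_nf hs hn⟩, ?_⟩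
  intro t u nt nu hst hnt hsu hnu
  rw [eq_nf hst hnt, eq_nf hsu hnu]
  exact Relation.eqvGen_iff_eq_of_normalizing (fun _ _ h => nf_eq_of_step h) steps_nf
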